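/- If X is a non-singular simplicial set and K any simplicial set, then the simplicial mapping set X^K is non-singular. -/

import Mathlib

open CategoryTheory Simplicial Opposite MonoidalCategory Limits

/-- The representing map of a simplex is degreewise injective. -/
def SSet.RepInj (X : SSet.{0}) {n : ℕ} (x : X _⦋n⦌) : Prop :=
  ∀ m : SimplexCategoryᵒᵖ, Function.Injective (((SSet.yonedaEquiv (X := X) (n := ⦋n⦌)).symm x).app m)

/-- The `i`-th vertex `x εᵢ` of a simplex. -/
def SSet.vert (X : SSet.{0}) {n : ℕ} (x : X _⦋n⦌) (i : Fin (n + 1)) : X _⦋0⦌ :=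
  X.map (SimplexCategory.const ⦋0⦌ ⦋n⦌ i).op x

/-- A simplex is degenerate if it is obtained from a simplex of strictly
lower degree by the action of an operator. -/
def SSet.IsDegenerate (X : SSet.{0}) {n : ℕ} (x : X _⦋n⦌) : Prop :=
  ∃ (m : ℕ) (_ : m < n) (α : (⦋n⦌ : SimplexCategory) ⟶ ⦋m⦌) (y : X _⦋m⦌),
    X.map α.op y = x

/-- A simplicial set is non-singular if every non-degenerate simplex has a
degreewise injective representing map. -/
def SSet.NonSingular (X : SSet.{0}) : Prop :=
  ∀ (n : ℕ) (x : X _⦋n⦌), ¬ X.IsDegenerate x → X.RepInj x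


/-- The simplicial mapping set `X^K`, whose `n`-simplices are the simplicial
maps `Δ[n] × K → X`. -/
noncomputable def SSet.sHom (K X : SSet.{0}) : SSet.{0} where
  obj m := SSet.stdSimplex.obj m.unop ⊗ K ⟶ X
  map α := TypeCat.ofHom fun f => (SSet.stdSimplex.map α.unop ▷ K) ≫ f
  map_id m := by
    refine ConcreteCategory.hom_ext _ _ fun f => ?_
    simp
    erw [CategoryTheory.Functor.map_id, MonoidalCategory.id_whiskerRight, Category.id_comp]
  map_comp α β := by
    refine ConcreteCategory.hom_ext _ _ fun f => ?_
    simp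
    erw [CategoryTheory.Functor.map_comp, MonoidalCategory.comp_whiskerRight, Category.assoc]

/-!
An `n`-simplex of `X^K` is a map `f : Δ[n] × K → X`, and its `i`-th vertex is the restriction of
`f` to `{i} × K`. A simplex has an injective representing map iff its vertices are pairwise
distinct, so it suffices to show that `f` is degenerate as soon as two vertices `i < j` agree.

In a non-singular `X` every simplex is a degeneracy of one with distinct vertices. Hence two faces
of a simplex agree as soon as their vertices agree, and if the vertices `a ≤ c` of a simplex
coincide then so does every vertex between them. The latter, applied to the triangles `(i, i+1, j)`,
shows that the vertices `i` and `i+1` of `f` agree. Then `f = s_i d_{i+1} f`: on a simplex `(η, k)`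
of `Δ[n] × K`, lowering a single coordinate of `η` from `i+1` to `i` amounts to passing between
the faces `d_r` and `d_{r+1}` of a simplex one dimension up whose vertices `r` and `r+1` have the
same image, and these faces agree; one coordinate at a time, `η` becomes `s_i d_{i+1} η`.
-/

open SimplexCategory

lemma SimplexCategory.σ_comp_δ_succ_apply {m : ℕ} (i : Fin (m + 1)) (a : Fin (m + 2)) :
    (σ i ≫ δ i.succ).toOrderHom a = if a = i.succ then i.castSucc else a := by
  change i.succ.succAbove (i.predAbove a) = _
  rcases lt_trichotomy a i.succ with h | rfl | h
  · rw [Fin.predAbove_of_lt_succ _ _ h, Fin.succAbove_castPred_of_lt _ _ h, if_neg h.ne]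
  · rw [Fin.predAbove_succ_self, Fin.succAbove_succ_self, if_pos rfl]
  · rw [Fin.predAbove_of_succ_le _ _ h.le, Fin.succAbove_pred_of_lt _ _ h, if_neg h.ne']

namespace SSet

variable {X : SSet.{0}}

lemma vert_map {p q : ℕ} (α : ⦋p⦌ ⟶ ⦋q⦌) (y : X _⦋q⦌) (t : Fin (p + 1)) :
    X.vert (X.map α.op y) t = X.vert y (α.toOrderHom t) := by
  simp only [vert, ← Functor.map_comp_apply, ← op_comp, SimplexCategory.const_comp]

lemma repInj_iff_injective_vert {n : ℕ} (x : X _⦋n⦌) :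
    X.RepInj x ↔ Function.Injective (X.vert x) := by
  constructor
  · intro hx a b hab
    have := stdSimplex.objEquiv.symm.injective (hx (op ⦋0⦌)
      (a₁ := stdSimplex.objEquiv.symm (⦋0⦌.const ⦋n⦌ a))
      (a₂ := stdSimplex.objEquiv.symm (⦋0⦌.const ⦋n⦌ b)) hab)
    exact congrArg (fun γ : ⦋0⦌ ⟶ ⦋n⦌ => γ.toOrderHom 0) this
  · intro hx m s s' hss'
    apply stdSimplex.objEquiv.injective
    ext t : 3
    apply hx
    have hss'' : X.map (stdSimplex.objEquiv s).op x = X.map (stdSimplex.objEquiv s').op x := hss'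
    simpa [vert, ← Functor.map_comp_apply, ← op_comp]
      using congrArg (X.map (⦋0⦌.const m.unop t).op) hss''

lemma NonSingular.exists_injective_vert (hX : X.NonSingular) {n : ℕ} (x : X _⦋n⦌) :
    ∃ (m : ℕ) (σ : ⦋n⦌ ⟶ ⦋m⦌) (y : X _⦋m⦌),
      Function.Injective (X.vert y) ∧ X.map σ.op y = x := by
  obtain ⟨m, σ, -, ⟨y, hy⟩, rfl⟩ := X.exists_nonDegenerate x
  exact ⟨m, σ, y, (repInj_iff_injective_vert y).1 (hX m y hy), rfl⟩

lemma NonSingular.map_eq_map_of_vert_eq (hX : X.NonSingular) {p q : ℕ} (x : X _⦋q⦌)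
    (u v : ⦋p⦌ ⟶ ⦋q⦌) (h : ∀ t, X.vert x (u.toOrderHom t) = X.vert x (v.toOrderHom t)) :
    X.map u.op x = X.map v.op x := by
  obtain ⟨m, σ, y, hy, rfl⟩ := hX.exists_injective_vert x
  simp only [vert_map] at h
  have : u ≫ σ = v ≫ σ := by
    ext t : 3
    exact hy (h t)
  simp only [← Functor.map_comp_apply, ← op_comp, this]

lemma NonSingular.vert_eq_of_le_of_le (hX : X.NonSingular) {q : ℕ} (x : X _⦋q⦌)
    {a b c : Fin (q + 1)} (hab : a ≤ b) (hbc : b ≤ c) (h : X.vert x a = X.vert x c) :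
    X.vert x a = X.vert x b := by
  obtain ⟨m, σ, y, hy, rfl⟩ := hX.exists_injective_vert x
  simp only [vert_map] at h ⊢
  have hσ := σ.toOrderHom.monotone
  rw [le_antisymm (hσ hab) ((hy h).symm ▸ hσ hbc)]

variable {K : SSet.{0}} {n : ℕ}

def evalAt (g : Δ[n] ⊗ K ⟶ X) {m : SimplexCategory} (η : m ⟶ ⦋n⦌) (k : K.obj (op m)) :
    X.obj (op m) :=
  g.app (op m) (stdSimplex.objEquiv.symm η, k)

def evalVertex (g : Δ[n] ⊗ K ⟶ X) (a : Fin (n + 1)) (κ : K _⦋0⦌) : X _⦋0⦌ :=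
  evalAt g (⦋0⦌.const ⦋n⦌ a) κ

lemma map_evalAt (g : Δ[n] ⊗ K ⟶ X) {m m' : SimplexCategory} (θ : m' ⟶ m) (η : m ⟶ ⦋n⦌)
    (k : K.obj (op m)) :
    X.map θ.op (evalAt g η k) = evalAt g (θ ≫ η) (K.map θ.op k) :=
  (NatTrans.naturality_apply g θ.op _).symm

lemma vert_evalAt (g : Δ[n] ⊗ K ⟶ X) {p : ℕ} (η : ⦋p⦌ ⟶ ⦋n⦌) (k : K _⦋p⦌) (s : Fin (p + 1)) :
    X.vert (evalAt g η k) s = evalVertex g (η.toOrderHom s) (K.map (⦋0⦌.const ⦋p⦌ s).op k) := by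
  rw [vert, map_evalAt, SimplexCategory.const_comp, evalVertex]

lemma evalVertex_eq_of_vert_eq {g : (sHom K X) _⦋n⦌} {a b : Fin (n + 1)}
    (h : (sHom K X).vert g a = (sHom K X).vert g b) : evalVertex g a = evalVertex g b := by
  funext κ
  exact congrArg (fun v : Δ[0] ⊗ K ⟶ X => v.app (op ⦋0⦌) (stdSimplex.objEquiv.symm (𝟙 _), κ)) h

lemma NonSingular.evalVertex_eq_of_le_of_le (hX : X.NonSingular) (g : Δ[n] ⊗ K ⟶ X)
    {a b c : Fin (n + 1)} (hab : a ≤ b) (hbc : b ≤ c) (h : evalVertex g a = evalVertex g c) :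
    evalVertex g a = evalVertex g b := by
  funext κ
  have hκ (s : Fin 3) : K.map (⦋0⦌.const ⦋2⦌ s).op (K.map (⦋2⦌.const ⦋0⦌ 0).op κ) = κ := by
    rw [← Functor.map_comp_apply, ← op_comp, SimplexCategory.const_comp,
      SimplexCategory.const_apply, const_eq_id, op_id, Functor.map_id_apply]
  have := hX.vert_eq_of_le_of_le
    (evalAt g (mkOfLeComp a b c hab hbc) (K.map (⦋2⦌.const ⦋0⦌ 0).op κ))
    (a := 0) (b := 1) (c := 2) (by decide) (by decide)
  simp only [vert_evalAt, hκ] at this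
  exact this (congrFun h κ)

lemma NonSingular.evalAt_eq_of_le_of_forall_ne_eq (hX : X.NonSingular) (g : Δ[n] ⊗ K ⟶ X)
    {p : ℕ} {α β : ⦋p⦌ ⟶ ⦋n⦌} (r : Fin (p + 1)) (hle : β.toOrderHom r ≤ α.toOrderHom r)
    (hne : ∀ t ≠ r, α.toOrderHom t = β.toOrderHom t)
    (hv : ∀ t, evalVertex g (α.toOrderHom t) = evalVertex g (β.toOrderHom t)) (k : K _⦋p⦌) :
    evalAt g α k = evalAt g β k := by
  -- `α` and `β` are the faces `d_r` and `d_{r+1}` of the `(p+1)`-simplex `(γ, σ_r^* k)`, whose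
  -- vertices `r` and `r+1` have the same image in `X`.
  let γ : ⦋p + 1⦌ ⟶ ⦋n⦌ := mkHom
    ⟨fun s => if s ≤ r.castSucc then β.toOrderHom (r.predAbove s) else α.toOrderHom (r.predAbove s),
      fun s s' hss' => by
        have hσ := (σ r).toOrderHom.monotone hss'
        dsimp only
        split_ifs with h h' h'
        · exact β.toOrderHom.monotone hσ
        · calc β.toOrderHom (r.predAbove s) ≤ β.toOrderHom r := β.toOrderHom.monotone <|
                  (Fin.predAbove_right_monotone r h).trans_eq (Fin.predAbove_castSucc_self r)
            _ ≤ α.toOrderHom r := hle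
            _ ≤ α.toOrderHom (r.predAbove s') := α.toOrderHom.monotone <|
                  (Fin.predAbove_succ_self r).symm.trans_le (Fin.predAbove_right_monotone r
                    (Fin.castSucc_lt_iff_succ_le.1 (not_le.1 h')))
        · exact absurd (hss'.trans h') h
        · exact α.toOrderHom.monotone hσ⟩
  have hγ (s) : γ.toOrderHom s =
      if s ≤ r.castSucc then β.toOrderHom (r.predAbove s) else α.toOrderHom (r.predAbove s) := rfl
  have hδ (i : Fin (p + 2)) (t) : (δ i).toOrderHom t = i.succAbove t := rfl
  have hα : δ r.castSucc ≫ γ = α := by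
    ext t : 3
    rw [comp_toOrderHom, OrderHom.comp_coe, Function.comp_apply, hδ, hγ]
    rcases lt_or_ge t r with h | h
    · rw [Fin.succAbove_castSucc_of_lt r t h, if_pos (Fin.castSucc_le_castSucc_iff.2 h.le),
        Fin.predAbove_castSucc_of_le r t h.le, hne t h.ne]
    · rw [Fin.succAbove_castSucc_of_le r t h, if_neg (by simpa [Fin.le_castSucc_iff] using h),
        Fin.predAbove_succ_of_le r t h]
  have hβ : δ r.succ ≫ γ = β := by
    ext t : 3
    rw [comp_toOrderHom, OrderHom.comp_coe, Function.comp_apply, hδ, hγ]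
    rcases le_or_gt t r with h | h
    · rw [Fin.succAbove_succ_of_le r t h, if_pos (Fin.castSucc_le_castSucc_iff.2 h),
        Fin.predAbove_castSucc_of_le r t h]
    · rw [Fin.succAbove_succ_of_lt r t h, if_neg (by simpa [Fin.le_castSucc_iff] using h.le),
        Fin.predAbove_succ_of_le r t h.le, hne t h.ne']
  have hσα : K.map (δ r.castSucc).op (K.map (σ r).op k) = k := by
    rw [← Functor.map_comp_apply, ← op_comp, δ_comp_σ_self, op_id, Functor.map_id_apply]
  have hσβ : K.map (δ r.succ).op (K.map (σ r).op k) = k := by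
    rw [← Functor.map_comp_apply, ← op_comp, δ_comp_σ_succ, op_id, Functor.map_id_apply]
  have hdα := map_evalAt g (δ r.castSucc) γ (K.map (σ r).op k)
  have hdβ := map_evalAt g (δ r.succ) γ (K.map (σ r).op k)
  rw [hα, hσα] at hdα
  rw [hβ, hσβ] at hdβ
  rw [← hdα, ← hdβ]
  refine hX.map_eq_map_of_vert_eq _ _ _ fun t => ?_
  rw [← vert_map, ← vert_map, hdα, hdβ, vert_evalAt, vert_evalAt, hv]

lemma NonSingular.evalAt_eq_of_le (hX : X.NonSingular) (g : Δ[n] ⊗ K ⟶ X) {p : ℕ}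
    {α β : ⦋p⦌ ⟶ ⦋n⦌} (hle : ∀ t, β.toOrderHom t ≤ α.toOrderHom t)
    (hv : ∀ t, evalVertex g (α.toOrderHom t) = evalVertex g (β.toOrderHom t)) (k : K _⦋p⦌) :
    evalAt g α k = evalAt g β k := by
  let μ (r : ℕ) : ⦋p⦌ ⟶ ⦋n⦌ := mkHom
    ⟨fun t => if (t : ℕ) < r then β.toOrderHom t else α.toOrderHom t, by
      intro t t' htt'
      dsimp only
      split_ifs with h h' h'
      · exact β.toOrderHom.monotone htt'
      · exact (β.toOrderHom.monotone htt').trans (hle t')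
      · exact absurd (lt_of_le_of_lt (show (t : ℕ) ≤ t' from htt') h') h
      · exact α.toOrderHom.monotone htt'⟩
  have hμ (r : ℕ) (t) : (μ r).toOrderHom t =
      if (t : ℕ) < r then β.toOrderHom t else α.toOrderHom t := rfl
  have hμv (r : ℕ) (t) : evalVertex g ((μ r).toOrderHom t) = evalVertex g (α.toOrderHom t) := by
    rw [hμ]
    split_ifs
    exacts [(hv t).symm, rfl]
  have hchain (r : ℕ) : evalAt g α k = evalAt g (μ r) k := by
    induction r with
    | zero =>
      congr 1
      ext t : 3
      simp [hμ]
    | succ r ih =>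
      rw [ih]
      by_cases hr : r < p + 1
      · refine hX.evalAt_eq_of_le_of_forall_ne_eq g ⟨r, hr⟩ (by simpa [hμ] using hle _)
          (fun t ht => ?_) (fun t => by rw [hμv, hμv]) k
        have : (t : ℕ) ≠ r := fun h => ht (Fin.ext h)
        simp only [hμ]
        split_ifs <;> first | rfl | omega
      · congr 1
        ext t : 3
        simp only [hμ]
        split_ifs <;> first | rfl | omega
  rw [hchain (p + 1)]
  congr 1
  ext t : 3
  exact if_pos t.isLt

lemma NonSingular.isDegenerate_sHom_of_evalVertex_eq (hX : X.NonSingular)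
    (f : (sHom K X) _⦋n + 1⦌) (i : Fin (n + 1))
    (h : evalVertex f i.castSucc = evalVertex f i.succ) :
    (sHom K X).IsDegenerate f := by
  let g : Δ[n + 1] ⊗ K ⟶ X := f
  refine ⟨n, n.lt_succ_self, σ i, (sHom K X).map (δ i.succ).op f, ?_⟩
  rw [← Functor.map_comp_apply, ← op_comp]
  change (SSet.stdSimplex.map (σ i ≫ δ i.succ) ▷ K) ≫ g = g
  refine SSet.hom_ext fun ⟨⟨p⟩⟩ => ?_
  ext ⟨s, k⟩
  obtain ⟨η, rfl⟩ := stdSimplex.objEquiv.symm.surjective s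
  change evalAt g (η ≫ σ i ≫ δ i.succ) k = evalAt g η k
  have hτ (t) : (η ≫ σ i ≫ δ i.succ).toOrderHom t =
      if η.toOrderHom t = i.succ then i.castSucc else η.toOrderHom t :=
    σ_comp_δ_succ_apply i _
  refine (hX.evalAt_eq_of_le g (fun t => ?_) (fun t => ?_) k).symm
  · rw [hτ]
    split_ifs with ht
    · exact ht ▸ Fin.castSucc_lt_succ.le
    · exact le_rfl
  · rw [hτ]
    split_ifs with ht
    · rw [ht, h]
    · rfl

lemma NonSingular.isDegenerate_sHom_of_vert_eq (hX : X.NonSingular) (f : (sHom K X) _⦋n⦌)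
    {i j : Fin (n + 1)} (hij : i < j) (h : (sHom K X).vert f i = (sHom K X).vert f j) :
    (sHom K X).IsDegenerate f := by
  obtain ⟨m, rfl⟩ : ∃ m, n = m + 1 := ⟨n - 1, by have := j.isLt; have : (i : ℕ) < j := hij; omega⟩
  obtain ⟨i, rfl⟩ : ∃ i' : Fin (m + 1), i'.castSucc = i :=
    ⟨i.castPred (Fin.ne_last_of_lt hij), by simp⟩
  refine hX.isDegenerate_sHom_of_evalVertex_eq f i ?_
  exact hX.evalVertex_eq_of_le_of_le f Fin.castSucc_lt_succ.le (Fin.castSucc_lt_iff_succ_le.1 hij)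
    (evalVertex_eq_of_vert_eq h)

end SSet

/-- If `X` is a non-singular simplicial set and `K` any
simplicial set, then the simplicial mapping set `X^K` is non-singular. -/
theorem nonSingular_sHom (X : SSet.{0}) (hX : X.NonSingular) (K : SSet.{0}) :
    (SSet.sHom K X).NonSingular := by
  intro n f hf
  rw [SSet.repInj_iff_injective_vert]
  intro i j hij
  by_contra hne
  rcases lt_or_gt_of_ne hne with hlt | hlt
  · exact hf (hX.isDegenerate_sHom_of_vert_eq f hlt hij)
  · exact hf (hX.isDegenerate_sHom_of_vert_eq f hlt hij.symm)
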